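/- Let n be even, b_0,…,b_n real distinct mod π, a real, B = Σ b_k. Then for z avoiding poles: sin((n+1)z−a)/∏_{k=0}^n sin(z−b_k) = Σ_{k=0}^n sin((n+1)b_k − a) cot(z−b_k) / ∏_{j≠k} sin(b_k−b_j) + (−4)^{n/2} cos(B−a). -/

import Mathlib

/-!
With `t = e^{2iz}`, `e_k = e^{2ib_k}`, `q = e^{ia}`, every sine is a ratio of binomials,
`sin (x - y) = (e^{2ix} - e^{2iy}) / (2i e^{ix} e^{iy})`, and
`cot (z - b_k) = i (t + e_k) / (t - e_k)`.
After the common factor `(2i)^n e^{iB} / (2q)` is pulled out, the identity becomes a rational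
identity in `t`: the Lagrange partial-fraction expansion of `(t^{n+1} - q²) / ∏ (t - e_k)` taken
at `t` and at `0`. The value at `0` brings in `∏ e_k = e^{2iB}`, which produces the constant term;
for even `n`, `(2i)^n = (-4)^{n/2}`.
-/

open Finset Polynomial Complex

namespace Lagrange

variable {F ι : Type*} [Field F] [DecidableEq ι] {s : Finset ι} {v : ι → F}

theorem eq_nodal_add_interpolate_of_monic (hvs : Set.InjOn v s) {f : F[X]} (hf : f.Monic)
    (hdeg : f.natDegree = #s) : f = nodal s v + interpolate s v fun i => f.eval (v i) := by
  have hf_deg : f.degree = #s := by rw [degree_eq_natDegree hf.ne_zero, hdeg]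
  have hlt : (f - nodal s v).degree < #s := hf_deg ▸ degree_sub_lt_left
    (by rw [degree_nodal, hf_deg]) hf.ne_zero (by rw [hf.leadingCoeff, nodal_monic.leadingCoeff])
  rw [← sub_eq_iff_eq_add', eq_interpolate_of_eval_eq _ hvs hlt]
  intro i hi
  rw [eval_sub, eval_nodal_at_node hi, sub_zero]

theorem eval_eq_eval_nodal_mul_one_add_sum (hvs : Set.InjOn v s) {f : F[X]} (hf : f.Monic)
    (hdeg : f.natDegree = #s) {x : F} (hx : ∀ i ∈ s, x ≠ v i) :
    f.eval x = (nodal s v).eval x *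
      (1 + ∑ i ∈ s, nodalWeight s v i * (x - v i)⁻¹ * f.eval (v i)) := by
  conv_lhs => rw [eq_nodal_add_interpolate_of_monic hvs hf hdeg]
  rw [eval_add, eval_interpolate_not_at_node _ hx, mul_one_add]

theorem sum_nodalWeight_mul_add_div_sub (hs : s.Nonempty) (hvs : Set.InjOn v s)
    (hv : ∀ i ∈ s, v i ≠ 0) (Q : F) {x : F} (hx : ∀ i ∈ s, x ≠ v i) :
    ∑ i ∈ s, nodalWeight s v i * (v i ^ #s - Q) * (x + v i) / (v i * (x - v i))
      = 2 * (x ^ #s - Q) / ∏ i ∈ s, (x - v i) - 1 + (-1) ^ #s * Q / ∏ i ∈ s, v i := by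
  set S : F → F := fun y => ∑ i ∈ s, nodalWeight s v i * (y - v i)⁻¹ * (v i ^ #s - Q)
  have hpf : ∀ y, (∀ i ∈ s, y ≠ v i) →
      y ^ #s - Q = (∏ i ∈ s, (y - v i)) * (1 + S y) := by
    intro y hy
    simpa [S, eval_nodal] using eval_eq_eval_nodal_mul_one_add_sum hvs
      (monic_X_pow_sub_C Q hs.card_pos.ne') natDegree_X_pow_sub_C hy
  -- `(x + v) / (v * (x - v)) = 2 / (x - v) - 1 / (0 - v)`: compare the expansions at `x` and `0`.
  have hterm : ∀ i ∈ s, nodalWeight s v i * (v i ^ #s - Q) * (x + v i) / (v i * (x - v i))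
      = 2 * (nodalWeight s v i * (x - v i)⁻¹ * (v i ^ #s - Q))
        - nodalWeight s v i * (0 - v i)⁻¹ * (v i ^ #s - Q) := by
    intro i hi
    have := hv i hi
    have := sub_ne_zero.mpr (hx i hi)
    field_simp
    ring
  rw [sum_congr rfl hterm, sum_sub_distrib, ← mul_sum]
  change 2 * S x - S 0 = _
  have hN : ∏ i ∈ s, (x - v i) ≠ 0 :=
    prod_ne_zero_iff.mpr fun i hi => sub_ne_zero.mpr (hx i hi)
  have hE : ∏ i ∈ s, v i ≠ 0 := prod_ne_zero_iff.mpr hv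
  have h0 := hpf 0 fun i hi h => hv i hi h.symm
  simp only [zero_sub, prod_neg, zero_pow hs.card_pos.ne'] at h0
  have hsq : ((-1 : F) ^ #s) ^ 2 = 1 := by rw [← pow_mul, mul_comm, pow_mul]; simp
  have hQ : (-1) ^ #s * Q / ∏ i ∈ s, v i = -(1 + S 0) := by
    rw [div_eq_iff hE]
    linear_combination -(-1) ^ #s * h0 - (∏ i ∈ s, v i) * (1 + S 0) * hsq
  rw [hpf x hx, mul_left_comm, mul_div_cancel_left₀ _ hN, hQ]
  ring

end Lagrange

namespace Complex

theorem sin_sub_eq_exp (x y : ℂ) :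
    sin (x - y) = (exp (I * x) ^ 2 - exp (I * y) ^ 2) / (2 * I * exp (I * x) * exp (I * y)) := by
  rw [sin, show -(x - y) * I = I * y - I * x by ring, show (x - y) * I = I * x - I * y by ring,
    exp_sub, exp_sub]
  have := exp_ne_zero (I * x)
  have := exp_ne_zero (I * y)
  field_simp
  ring_nf
  rw [I_sq]
  ring

theorem cos_sub_eq_exp (x y : ℂ) :
    cos (x - y) = (exp (I * x) ^ 2 + exp (I * y) ^ 2) / (2 * exp (I * x) * exp (I * y)) := by
  rw [cos, show -(x - y) * I = I * y - I * x by ring, show (x - y) * I = I * x - I * y by ring,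
    exp_sub, exp_sub]
  have := exp_ne_zero (I * x)
  have := exp_ne_zero (I * y)
  field_simp

theorem cot_sub_eq_exp (x y : ℂ) :
    cot (x - y) =
      I * (exp (I * x) ^ 2 + exp (I * y) ^ 2) / (exp (I * x) ^ 2 - exp (I * y) ^ 2) := by
  rw [cot, cos_sub_eq_exp, sin_sub_eq_exp]
  have := exp_ne_zero (I * x)
  have := exp_ne_zero (I * y)
  by_cases h : exp (I * x) ^ 2 - exp (I * y) ^ 2 = 0
  · simp [h]
  field_simp

theorem prod_sin_sub_eq_exp {ι : Type*} (s : Finset ι) (x : ℂ) (y : ι → ℂ) :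
    ∏ j ∈ s, sin (x - y j) = (∏ j ∈ s, (exp (I * x) ^ 2 - exp (I * y j) ^ 2)) /
      ((2 * I * exp (I * x)) ^ #s * ∏ j ∈ s, exp (I * y j)) := by
  simp only [sin_sub_eq_exp, prod_div_distrib, prod_mul_distrib, prod_const, mul_pow]

theorem exp_mul_natCast_succ_mul (n : ℕ) (x : ℂ) :
    exp (I * ((n + 1) * x)) = exp (I * x) ^ (n + 1) := by
  rw [← exp_nat_mul]; push_cast; ring_nf

theorem sin_succ_mul_sub_div_prod_sin_sub (n : ℕ) (z a : ℂ) (b : Fin (n + 1) → ℂ) :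
    sin ((n + 1) * z - a) / ∏ k, sin (z - b k) =
      (2 * I) ^ n * (∏ k, exp (I * b k)) / (2 * exp (I * a)) *
        (2 * ((exp (I * z) ^ 2) ^ (n + 1) - exp (I * a) ^ 2) /
          ∏ k, (exp (I * z) ^ 2 - exp (I * b k) ^ 2)) := by
  rw [sin_sub_eq_exp, exp_mul_natCast_succ_mul, prod_sin_sub_eq_exp, card_univ,
    Fintype.card_fin]
  have := exp_ne_zero (I * z)
  have := exp_ne_zero (I * a)
  have : ∏ k, exp (I * b k) ≠ 0 := prod_ne_zero_iff.mpr fun k _ => exp_ne_zero _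
  by_cases h : ∏ k, (exp (I * z) ^ 2 - exp (I * b k) ^ 2) = 0
  · simp [h]
  field_simp
  ring

theorem sin_mul_cot_div_prod_sin_sub (n : ℕ) (z a : ℂ) (b : Fin (n + 1) → ℂ)
    (k : Fin (n + 1)) :
    sin ((n + 1) * b k - a) * cot (z - b k) / ∏ j ∈ univ.erase k, sin (b k - b j) =
      (2 * I) ^ n * (∏ j, exp (I * b j)) / (2 * exp (I * a)) *
        (Lagrange.nodalWeight univ (fun j => exp (I * b j) ^ 2) k *
          ((exp (I * b k) ^ 2) ^ (n + 1) - exp (I * a) ^ 2) *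
          (exp (I * z) ^ 2 + exp (I * b k) ^ 2) /
          (exp (I * b k) ^ 2 * (exp (I * z) ^ 2 - exp (I * b k) ^ 2))) := by
  rw [sin_sub_eq_exp, exp_mul_natCast_succ_mul, cot_sub_eq_exp, prod_sin_sub_eq_exp,
    card_erase_of_mem (mem_univ k), card_univ, Fintype.card_fin, Nat.add_sub_cancel,
    Lagrange.nodalWeight, prod_inv_distrib, ← mul_prod_erase univ _ (mem_univ k)]
  have := exp_ne_zero (I * b k)
  have := exp_ne_zero (I * a)
  have : ∏ j ∈ univ.erase k, exp (I * b j) ≠ 0 :=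
    prod_ne_zero_iff.mpr fun j _ => exp_ne_zero _
  have := I_ne_zero
  by_cases h : ∏ j ∈ univ.erase k, (exp (I * b k) ^ 2 - exp (I * b j) ^ 2) = 0
  · simp [h]
  by_cases h' : exp (I * z) ^ 2 - exp (I * b k) ^ 2 = 0
  · simp [h']
  field_simp
  ring

theorem neg_four_pow_half_of_even {n : ℕ} (hn : Even n) : (-4 : ℂ) ^ (n / 2) = (2 * I) ^ n := by
  obtain ⟨m, rfl⟩ := hn
  rw [← two_mul, Nat.mul_div_cancel_left m two_pos, pow_mul, mul_pow, I_sq]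
  norm_num

theorem two_mul_I_pow_mul_cos_sum_sub (n : ℕ) (a : ℂ) (b : Fin (n + 1) → ℂ) :
    (2 * I) ^ n * cos (∑ k, b k - a) =
      (2 * I) ^ n * (∏ k, exp (I * b k)) / (2 * exp (I * a)) *
        (1 + exp (I * a) ^ 2 / ∏ k, exp (I * b k) ^ 2) := by
  rw [cos_sub_eq_exp, mul_sum, exp_sum, prod_pow]
  have := exp_ne_zero (I * a)
  have : ∏ k, exp (I * b k) ≠ 0 := prod_ne_zero_iff.mpr fun k _ => exp_ne_zero _
  field_simp

end Complex

theorem cot_expansion_even (n : ℕ) (hn : Even n) (b : Fin (n + 1) → ℝ)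
    (hb : ∀ j k, j ≠ k → Real.sin (b j - b k) ≠ 0)
    (a : ℝ) (B : ℝ) (hB : B = ∑ k, b k)
    (z : ℂ) (hz : ∀ k, Complex.sin (z - (b k : ℂ)) ≠ 0) :
    Complex.sin (((n : ℂ) + 1) * z - (a : ℂ)) / ∏ k, Complex.sin (z - (b k : ℂ))
      = (∑ k, Complex.sin (((n : ℂ) + 1) * (b k : ℂ) - (a : ℂ)) *
            Complex.cot (z - (b k : ℂ)) /
            ∏ j ∈ univ.erase k, Complex.sin ((b k : ℂ) - (b j : ℂ)))
        + (-4 : ℂ) ^ (n / 2) * Complex.cos ((B : ℂ) - (a : ℂ)) := by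
  set e : Fin (n + 1) → ℂ := fun k => exp (I * b k) ^ 2
  have he : Function.Injective e := by
    intro j k hjk
    by_contra hne
    refine hb j k hne (ofReal_injective ?_)
    rw [ofReal_sin, ofReal_sub, sin_sub_eq_exp]
    simp [e, hjk]
  have hz' : ∀ k ∈ univ, exp (I * z) ^ 2 ≠ e k := fun k _ h =>
    hz k (by rw [sin_sub_eq_exp, h]; simp [e])
  have key := Lagrange.sum_nodalWeight_mul_add_div_sub univ_nonempty he.injOn
    (fun k _ => pow_ne_zero _ (exp_ne_zero _)) (exp (I * a) ^ 2) hz'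
  rw [card_univ, Fintype.card_fin, hn.add_one.neg_one_pow] at key
  rw [sin_succ_mul_sub_div_prod_sin_sub n z a (fun k => (b k : ℂ)),
    sum_congr rfl fun k _ => sin_mul_cot_div_prod_sin_sub n z a (fun k => (b k : ℂ)) k,
    ← mul_sum, key, neg_four_pow_half_of_even hn, hB, ofReal_sum,
    two_mul_I_pow_mul_cos_sum_sub]
  ring
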